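/- For Z(t) = X(t)+iY(t) a point in the Siegel upper half space, v a nonzero vector in ℂⁿ, and γ a complex symmetric n×n matrix, one has F_{v*Zv}(v*γv) ≤ F_Z(γ), i.e., |v*γv|/(v*Yv) ≤ ‖Y^{-1/2} γ Y^{-1/2}‖, where Y = Im Z is positive definite. -/

import Mathlib

open Matrix

noncomputable section

/-- The standard symplectic form matrix over ℂ. -/
def J (n : ℕ) : Matrix (Fin n ⊕ Fin n) (Fin n ⊕ Fin n) ℂ :=
  Matrix.fromBlocks 0 1 (-1) 0

/-- The standard symplectic form matrix over ℝ. -/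
def JR (n : ℕ) : Matrix (Fin n ⊕ Fin n) (Fin n ⊕ Fin n) ℝ :=
  Matrix.fromBlocks 0 1 (-1) 0

/-- Membership in the Siegel upper half space: symmetric with positive definite
imaginary part. -/
def InSiegel {n : ℕ} (Z : Matrix (Fin n) (Fin n) ℂ) : Prop :=
  Zᵀ = Z ∧ (Z.map Complex.im).PosDef

/-- Membership in the lower Siegel space: symmetric with negative definite
imaginary part. -/
def InSiegelBar {n : ℕ} (Z : Matrix (Fin n) (Fin n) ℂ) : Prop :=
  Zᵀ = Z ∧ (-(Z.map Complex.im)).PosDef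

/-- The generalized linear fractional transformation Φ. -/
def Phi {n : ℕ} (A B C D Z : Matrix (Fin n) (Fin n) ℂ) : Matrix (Fin n) (Fin n) ℂ :=
  (A * Z + B) * (C * Z + D)⁻¹

/-- The ℓ²-operator norm of a complex matrix. -/
def opNorm {n : ℕ} (M : Matrix (Fin n) (Fin n) ℂ) : ℝ :=
  ‖Matrix.toEuclideanCLM (𝕜 := ℂ) (n := Fin n) M‖

section

open scoped ComplexOrder

/-- The positive semidefinite square root of a positive semidefinite matrix
(the definition Mathlib had in December 2024, since removed from Mathlib). -/
def Matrix.PosSemidef.sqrt {m : Type*} [Fintype m] [DecidableEq m] {𝕜 : Type*} [RCLike 𝕜]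
    {A : Matrix m m 𝕜} (hA : A.PosSemidef) : Matrix m m 𝕜 :=
  hA.1.eigenvectorUnitary.1 * diagonal ((↑) ∘ (√·) ∘ hA.1.eigenvalues) *
  (star hA.1.eigenvectorUnitary : Matrix m m 𝕜)

end

/-! Writing `v = S w` with `S = Y^{-1/2}` turns `v*Yv` into `‖w‖²` and `v*γv` into `w*(SγS)w`,
which Cauchy–Schwarz bounds by `‖SγS‖ ‖w‖²`. -/

open scoped ComplexOrder

namespace Matrix.PosSemidef

variable {m 𝕜 : Type*} [Fintype m] [DecidableEq m] [RCLike 𝕜] {A : Matrix m m 𝕜}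

theorem sqrt_mul_self (hA : A.PosSemidef) : hA.sqrt * hA.sqrt = A := by
  set U : Matrix m m 𝕜 := (hA.1.eigenvectorUnitary : Matrix m m 𝕜)
  have hU : star U * U = 1 := Unitary.coe_star_mul_self hA.1.eigenvectorUnitary
  conv_rhs => rw [hA.1.spectral_theorem, Unitary.conjStarAlgAut_apply]
  calc hA.sqrt * hA.sqrt
      = U * (diagonal ((↑) ∘ (√·) ∘ hA.1.eigenvalues) * (star U * U) *
          diagonal ((↑) ∘ (√·) ∘ hA.1.eigenvalues)) * star U := by
        simp only [sqrt, U, mul_assoc]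
    _ = _ := by
      rw [hU, mul_one, diagonal_mul_diagonal]
      congr 3
      funext i
      simp [← RCLike.ofReal_mul, Real.mul_self_sqrt (hA.eigenvalues_nonneg i)]

theorem isHermitian_sqrt (hA : A.PosSemidef) : hA.sqrt.IsHermitian := by
  simp [IsHermitian, sqrt, conjTranspose_mul, mul_assoc, star_eq_conjTranspose, Pi.star_def,
    Function.comp_def]

end Matrix.PosSemidef

theorem Matrix.star_mulVec_dotProduct_mulVec {m R : Type*} [Fintype m] [CommSemiring R] [StarRing R]
    (A B : Matrix m m R) (v w : m → R) :
    star (A *ᵥ v) ⬝ᵥ B *ᵥ w = star v ⬝ᵥ (Aᴴ * B) *ᵥ w := by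
  rw [star_mulVec, dotProduct_mulVec, vecMul_vecMul, ← dotProduct_mulVec]

theorem norm_dotProduct_mulVec_le_opNorm {n : ℕ} (M : Matrix (Fin n) (Fin n) ℂ) (w : Fin n → ℂ) :
    ‖star w ⬝ᵥ M *ᵥ w‖ ≤ opNorm M * (star w ⬝ᵥ w).re := by
  set x : EuclideanSpace ℂ (Fin n) := WithLp.toLp 2 w
  have hinner : inner ℂ x (toEuclideanCLM (𝕜 := ℂ) M x) = star w ⬝ᵥ M *ᵥ w :=
    dotProduct_comm _ _
  have hnorm : (star w ⬝ᵥ w).re = ‖x‖ ^ 2 := by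
    rw [← show inner ℂ x x = star w ⬝ᵥ w from dotProduct_comm _ _, inner_self_eq_norm_sq_to_K]
    norm_cast
  rw [← hinner, hnorm]
  calc ‖inner ℂ x (toEuclideanCLM (𝕜 := ℂ) M x)‖
      ≤ ‖x‖ * ‖toEuclideanCLM (𝕜 := ℂ) M x‖ := norm_inner_le_norm _ _
    _ ≤ ‖x‖ * (opNorm M * ‖x‖) := by gcongr; exact ContinuousLinearMap.le_opNorm _ _
    _ = opNorm M * ‖x‖ ^ 2 := by ring

theorem norm_quadForm_div_le_opNorm {n : ℕ} {S Y : Matrix (Fin n) (Fin n) ℂ}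
    (hS : S.IsHermitian) (hY : Y.IsHermitian) (hSSY : S * S * Y = 1)
    (γ : Matrix (Fin n) (Fin n) ℂ) (v : Fin n → ℂ) :
    ‖star v ⬝ᵥ γ *ᵥ v‖ / (star v ⬝ᵥ Y *ᵥ v).re ≤ opNorm (S * γ * S) := by
  set w := (S * Y) *ᵥ v
  have hv : v = S *ᵥ w := by rw [mulVec_mulVec, ← mul_assoc, hSSY, one_mulVec]
  have hw : star w ⬝ᵥ w = star v ⬝ᵥ Y *ᵥ v := by
    rw [star_mulVec_dotProduct_mulVec, conjTranspose_mul, hS.eq, hY.eq, mul_assoc, ← mul_assoc S,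
      hSSY, mul_one]
  have hγ : star v ⬝ᵥ γ *ᵥ v = star w ⬝ᵥ (S * γ * S) *ᵥ w := by
    rw [hv, ← mulVec_mulVec, star_mulVec_dotProduct_mulVec, hS.eq]
  rw [hγ, ← hw]
  exact div_le_of_le_mul₀ (Complex.nonneg_iff.mp (dotProduct_star_self_nonneg w)).1
    (norm_nonneg _) (norm_dotProduct_mulVec_le_opNorm (S * γ * S) w)

theorem stmt19_general (n : ℕ) (Z γ : Matrix (Fin n) (Fin n) ℂ)
    (hY : (Z.map Complex.im).PosDef)
    (v : Fin n → ℂ) :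
    ‖star v ⬝ᵥ γ.mulVec v‖ /
        (star v ⬝ᵥ ((Z.map Complex.im).map Complex.ofReal).mulVec v).re ≤
      opNorm ((hY.inv.posSemidef.sqrt.map Complex.ofReal) * γ *
        (hY.inv.posSemidef.sqrt.map Complex.ofReal)) := by
  set Y := Z.map Complex.im
  set S := hY.inv.posSemidef.sqrt
  have hSSY : S * S * Y = 1 := by
    rw [hY.inv.posSemidef.sqrt_mul_self, nonsing_inv_mul Y ((isUnit_iff_isUnit_det Y).mp hY.isUnit)]
  have hofReal : Function.Semiconj Complex.ofReal star star := fun x => (Complex.conj_ofReal x).symm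
  refine norm_quadForm_div_le_opNorm (hY.inv.posSemidef.isHermitian_sqrt.map _ hofReal)
    (hY.1.map _ hofReal) ?_ γ v
  have h := congrArg (Matrix.map · Complex.ofRealHom) hSSY
  simp only [Matrix.map_mul, Matrix.map_one _ (map_zero _) (map_one _)] at h
  exact h

theorem stmt19 (n : ℕ) (Z γ : Matrix (Fin n) (Fin n) ℂ)
    (hZs : Zᵀ = Z) (hY : (Z.map Complex.im).PosDef) (hγ : γᵀ = γ)
    (v : Fin n → ℂ) (hv : v ≠ 0) :
    ‖star v ⬝ᵥ γ.mulVec v‖ /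
        (star v ⬝ᵥ ((Z.map Complex.im).map Complex.ofReal).mulVec v).re ≤
      opNorm ((hY.inv.posSemidef.sqrt.map Complex.ofReal) * γ *
        (hY.inv.posSemidef.sqrt.map Complex.ofReal)) :=
  stmt19_general n Z γ hY v
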